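/- arXiv:math/0108087 — 5 statements merged into one kernel-verified Lean document; each statement's English description precedes it below -/
import Mathlib

section
/- Let (A, ·, [·,·]_0) be a Poisson algebra over a field F of characteristic 0, and let ∂, ∂_0 be mutually commuting derivations of (A, ·) satisfying ∂([u,v]_0) = [∂(u),v]_0 + [u,∂(v)]_0 - 2[u,v]_0 and ∂_0([u,v]_0) = [∂_0(u),v]_0 + [u,∂_0(v)]_0 for all u, v ∈ A. Define [u,v] = [u,v]_0 + (2-∂)(u)·∂_0(v) - ∂_0(u)·(2-∂)(v). Then (A, [·,·]) is a Lie algebra. -/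
/-- A Poisson algebra with two commuting derivations satisfying the
contact compatibility conditions yields a Lie algebra via the contact bracket. -/
theorem stmt0 {F A : Type*} [Field F] [CharZero F] [CommRing A] [Algebra F A]
    (b : A →ₗ[F] A →ₗ[F] A)
    (hbalt : ∀ u : A, b u u = 0)
    (hbjac : ∀ u v w : A, b (b u v) w + b (b v w) u + b (b w u) v = 0)
    (hbleib : ∀ u v w : A, b u (v * w) = b u v * w + v * b u w)
    (D D0 : A →ₗ[F] A)
    (hD : ∀ u v : A, D (u * v) = D u * v + u * D v)
    (hD0 : ∀ u v : A, D0 (u * v) = D0 u * v + u * D0 v)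
    (hcomm : ∀ u : A, D (D0 u) = D0 (D u))
    (hDb : ∀ u v : A, D (b u v) = b (D u) v + b u (D v) - 2 • b u v)
    (hD0b : ∀ u v : A, D0 (b u v) = b (D0 u) v + b u (D0 v)) :
    let B : A → A → A := fun u v =>
      b u v + (2 • u - D u) * D0 v - D0 u * (2 • v - D v)
    (∀ u : A, B u u = 0) ∧
    (∀ u v w : A, B (B u v) w + B (B v w) u + B (B w u) v = 0) := by
  intro B
  have hsk : ∀ x y : A, b x y = - b y x := by
    intro x y
    have h := hbalt (x + y)
    simp only [map_add, LinearMap.add_apply, hbalt] at h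
    linear_combination h
  have hbleib' : ∀ x y z : A, b (x * y) z = b x z * y + x * b y z := by
    intro x y z
    rw [hsk (x * y) z, hbleib, hsk x z, hsk y z]
    ring
  constructor
  · intro u
    show b u u + (2 • u - D u) * D0 u - D0 u * (2 • u - D u) = 0
    rw [hbalt]
    ring
  · intro u v w
    show b (B u v) w + (2 • (B u v) - D (B u v)) * D0 w - D0 (B u v) * (2 • w - D w)
       + (b (B v w) u + (2 • (B v w) - D (B v w)) * D0 u - D0 (B v w) * (2 • u - D u))
       + (b (B w u) v + (2 • (B w u) - D (B w u)) * D0 v - D0 (B w u) * (2 • v - D v)) = 0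
    simp only [B, map_add, map_sub, map_nsmul, LinearMap.add_apply, LinearMap.sub_apply,
      LinearMap.smul_apply, hbleib, hbleib', hD, hD0, hDb, hD0b, hcomm, smul_mul_assoc,
      mul_smul_comm, smul_sub, smul_add]
    linear_combination hbjac u v w
      + (-2 * u) * hsk v (D0 w) + (2 * D0 u) * hsk v w
      + (-(D0 u)) * hsk v (D w) + (D u) * hsk v (D0 w)
      + (-2 * v) * hsk (D0 u) w + (2 * D0 v) * hsk u w
      + (-(D0 v)) * hsk (D u) w + (D v) * hsk (D0 u) w
      + (-2 * w) * hsk u (D0 v) + (2 * D0 w) * hsk u v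
      + (-(D0 w)) * hsk u (D v) + (D w) * hsk u (D0 v)
end

section
/- Let A be a commutative associative algebra with a bracket [·,·] making it a Lie algebra, where [·,·] is given by [u,v] = [u,v]_0 + (2-∂)(u)·∂_0(v) - ∂_0(u)·(2-∂)(v), with [·,·]_0 making (A,·,[·,·]_0) a Poisson algebra and ∂, ∂_0 commuting derivations of (A,·) satisfying the contact compatibility conditions, and for u ∈ A let P_u(v,w) := [u, v·w] - [u,v]·w - v·[u,w]. Then P_{u·v}(w_1,w_2) = u·P_v(w_1,w_2) + v·P_u(w_1,w_2) for all u,v,w_1,w_2 ∈ A. -/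
/-- For a contact Lie bracket built from a Poisson bracket and two
commuting derivations, P_{u·v}(w₁,w₂) = u·P_v(w₁,w₂) + v·P_u(w₁,w₂). -/
theorem stmt1 {F A : Type*} [Field F] [CharZero F] [CommRing A] [Algebra F A]
    (b : A →ₗ[F] A →ₗ[F] A)
    (hbalt : ∀ u : A, b u u = 0)
    (hbjac : ∀ u v w : A, b (b u v) w + b (b v w) u + b (b w u) v = 0)
    (hbleib : ∀ u v w : A, b u (v * w) = b u v * w + v * b u w)
    (D D0 : A →ₗ[F] A)
    (hD : ∀ u v : A, D (u * v) = D u * v + u * D v)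
    (hD0 : ∀ u v : A, D0 (u * v) = D0 u * v + u * D0 v)
    (hcomm : ∀ u : A, D (D0 u) = D0 (D u))
    (hDb : ∀ u v : A, D (b u v) = b (D u) v + b u (D v) - 2 • b u v)
    (hD0b : ∀ u v : A, D0 (b u v) = b (D0 u) v + b u (D0 v))
    (L : A → A → A)
    (hL : ∀ u v : A, L u v = b u v + (2 • u - D u) * D0 v - D0 u * (2 • v - D v)) :
    let P : A → A → A → A := fun u v w => L u (v * w) - L u v * w - v * L u w
    ∀ u v w₁ w₂ : A, P (u * v) w₁ w₂ = u * P v w₁ w₂ + v * P u w₁ w₂ := by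
  intro P u v w₁ w₂
  simp only [P, hL, hbleib, hD, hD0]
  ring
end

section
/- Let A be a commutative associative algebra with commuting derivations ∂_1,...,∂_k, ∂_{k+1},...,∂_{2k}, and elements ξ_1,...,ξ_k ∈ A satisfying ∂_i(ξ_j) = ∂_{k+i}(ξ_j) = 0 for all i,j ∈ {1,...,k} with i ≠ j. Define [u,v]_0 = Σ_{i=1}^{k} ξ_i·(∂_i(u)∂_{k+i}(v) - ∂_{k+i}(u)∂_i(v)). Then (A, ·, [·,·]_0) is a Poisson algebra. -/
section PoissonAux
variable {F A : Type*} [Field F] [CommRing A] [Algebra F A]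

/-- Diagonal case: a single "2D" bracket satisfies Jacobi. -/
lemma diag_jac (D D' : A →ₗ[F] A) (ξ : A)
    (h : ∀ u v : A, D (u * v) = D u * v + u * D v)
    (h' : ∀ u v : A, D' (u * v) = D' u * v + u * D' v)
    (hc : ∀ u : A, D' (D u) = D (D' u))
    (u v w : A) :
    (ξ * (D (ξ * (D u * D' v - D' u * D v)) * D' w -
          D' (ξ * (D u * D' v - D' u * D v)) * D w)) +
    (ξ * (D (ξ * (D v * D' w - D' v * D w)) * D' u -
          D' (ξ * (D v * D' w - D' v * D w)) * D u)) +
    (ξ * (D (ξ * (D w * D' u - D' w * D u)) * D' v -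
          D' (ξ * (D w * D' u - D' w * D u)) * D v)) = 0 := by
  simp only [map_sub, h, h', hc]
  ring

/-- Cross case: two "2D" brackets whose coefficients are annihilated by the
other's derivations have vanishing mixed Jacobiator. -/
lemma cross_jac (D1 D1' D2 D2' : A →ₗ[F] A) (ξ1 ξ2 : A)
    (h1 : ∀ u v : A, D1 (u * v) = D1 u * v + u * D1 v)
    (h1' : ∀ u v : A, D1' (u * v) = D1' u * v + u * D1' v)
    (h2 : ∀ u v : A, D2 (u * v) = D2 u * v + u * D2 v)
    (h2' : ∀ u v : A, D2' (u * v) = D2' u * v + u * D2' v)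
    (c1 : ∀ u : A, D2 (D1 u) = D1 (D2 u))
    (c2 : ∀ u : A, D2 (D1' u) = D1' (D2 u))
    (c3 : ∀ u : A, D2' (D1 u) = D1 (D2' u))
    (c4 : ∀ u : A, D2' (D1' u) = D1' (D2' u))
    (z1 : D2 ξ1 = 0) (z1' : D2' ξ1 = 0)
    (z2 : D1 ξ2 = 0) (z2' : D1' ξ2 = 0)
    (u v w : A) :
    (ξ2 * (D2 (ξ1 * (D1 u * D1' v - D1' u * D1 v)) * D2' w -
           D2' (ξ1 * (D1 u * D1' v - D1' u * D1 v)) * D2 w)) +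
    (ξ2 * (D2 (ξ1 * (D1 v * D1' w - D1' v * D1 w)) * D2' u -
           D2' (ξ1 * (D1 v * D1' w - D1' v * D1 w)) * D2 u)) +
    (ξ2 * (D2 (ξ1 * (D1 w * D1' u - D1' w * D1 u)) * D2' v -
           D2' (ξ1 * (D1 w * D1' u - D1' w * D1 u)) * D2 v)) +
    (ξ1 * (D1 (ξ2 * (D2 u * D2' v - D2' u * D2 v)) * D1' w -
           D1' (ξ2 * (D2 u * D2' v - D2' u * D2 v)) * D1 w)) +
    (ξ1 * (D1 (ξ2 * (D2 v * D2' w - D2' v * D2 w)) * D1' u -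
           D1' (ξ2 * (D2 v * D2' w - D2' v * D2 w)) * D1 u)) +
    (ξ1 * (D1 (ξ2 * (D2 w * D2' u - D2' w * D2 u)) * D1' v -
           D1' (ξ2 * (D2 w * D2' u - D2' w * D2 u)) * D1 v)) = 0 := by
  simp only [map_sub, h1, h1', h2, h2', c1, c2, c3, c4, z1, z1', z2, z2',
    zero_mul, mul_zero]
  ring
end PoissonAux

/-- The bracket [u,v]₀ = Σᵢ ξᵢ·(∂ᵢ(u)∂_{k+i}(v) - ∂_{k+i}(u)∂ᵢ(v))
built from 2k commuting derivations and elements ξᵢ with ∂ᵢ(ξⱼ)=∂_{k+i}(ξⱼ)=0 for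
i ≠ j makes A a Poisson algebra. -/
theorem stmt3 {F A : Type*} [Field F] [CharZero F] [CommRing A] [Algebra F A]
    (k : ℕ) (d d' : Fin k → (A →ₗ[F] A)) (ξ : Fin k → A)
    (hd : ∀ i, ∀ u v : A, d i (u * v) = d i u * v + u * d i v)
    (hd' : ∀ i, ∀ u v : A, d' i (u * v) = d' i u * v + u * d' i v)
    (hcomm₁ : ∀ i j, ∀ u : A, d i (d j u) = d j (d i u))
    (hcomm₂ : ∀ i j, ∀ u : A, d i (d' j u) = d' j (d i u))
    (hcomm₃ : ∀ i j, ∀ u : A, d' i (d' j u) = d' j (d' i u))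
    (hξ : ∀ i j, i ≠ j → d i (ξ j) = 0 ∧ d' i (ξ j) = 0) :
    let b : A → A → A := fun u v => ∑ i : Fin k, ξ i * (d i u * d' i v - d' i u * d i v)
    (∀ u : A, b u u = 0) ∧
    (∀ u v w : A, b (b u v) w + b (b v w) u + b (b w u) v = 0) ∧
    (∀ u v w : A, b u (v * w) = b u v * w + v * b u w) := by
  intro b
  have hb : ∀ u v : A, b u v = ∑ i : Fin k, ξ i * (d i u * d' i v - d' i u * d i v) :=
    fun _ _ => rfl
  refine ⟨?_, ?_, ?_⟩
  · intro u
    rw [hb]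
    apply Finset.sum_eq_zero
    intro i _
    rw [mul_comm (d' i u) (d i u), sub_self, mul_zero]
  · intro u v w
    -- C p x y z : the (p.1-inner, p.2-outer) contribution to b (b x y) z
    set C : Fin k × Fin k → A → A → A → A := fun p x y z =>
      ξ p.2 * (d p.2 (ξ p.1 * (d p.1 x * d' p.1 y - d' p.1 x * d p.1 y)) * d' p.2 z -
               d' p.2 (ξ p.1 * (d p.1 x * d' p.1 y - d' p.1 x * d p.1 y)) * d p.2 z) with hC
    have key : ∀ x y z : A, b (b x y) z = ∑ p : Fin k × Fin k, C p x y z := by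
      intro x y z
      rw [hb (b x y) z, Fintype.sum_prod_type_right]
      refine Finset.sum_congr rfl fun j _ => ?_
      rw [hb x y, map_sum, map_sum, Finset.sum_mul, Finset.sum_mul,
        ← Finset.sum_sub_distrib, Finset.mul_sum]
    rw [key, key, key, ← Finset.sum_add_distrib, ← Finset.sum_add_distrib]
    have hdiag : ∀ i : Fin k,
        C (i, i) u v w + C (i, i) v w u + C (i, i) w u v = 0 := by
      intro i
      exact diag_jac (d i) (d' i) (ξ i) (hd i) (hd' i)
        (fun x => (hcomm₂ i i x).symm) u v w
    have hpair : ∀ p : Fin k × Fin k,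
        (C p u v w + C p v w u + C p w u v) +
        (C p.swap u v w + C p.swap v w u + C p.swap w u v) = 0 := by
      rintro ⟨i, j⟩
      by_cases hij : i = j
      · subst hij
        simp only [Prod.swap_prod_mk]
        rw [hdiag i, add_zero]
      · have h := cross_jac (d i) (d' i) (d j) (d' j) (ξ i) (ξ j)
          (hd i) (hd' i) (hd j) (hd' j)
          (fun x => hcomm₁ j i x) (fun x => hcomm₂ j i x)
          (fun x => (hcomm₂ i j x).symm) (fun x => hcomm₃ j i x)
          (hξ j i (Ne.symm hij)).1 (hξ j i (Ne.symm hij)).2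
          (hξ i j hij).1 (hξ i j hij).2 u v w
        simp only [Prod.swap_prod_mk, hC]
        linear_combination h
    refine Finset.sum_ninvolution Prod.swap (fun p => hpair p) ?_
      (fun p => Finset.mem_univ _) (fun p => Prod.swap_swap p)
    · intro p hf hsw
      apply hf
      obtain ⟨i, j⟩ := p
      have : j = i := congrArg Prod.fst hsw
      subst this
      exact hdiag j
  · intro u v w
    rw [hb, hb, hb, Finset.sum_mul, Finset.mul_sum, ← Finset.sum_add_distrib]
    refine Finset.sum_congr rfl fun i _ => ?_
    rw [hd i v w, hd' i v w]
    ring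
end

section
/- Let F be a field of characteristic 0 and consider the Lie algebra B with basis {x^α : α ∈ Γ} for an additive subgroup Γ ⊆ F^2 (write α = (α_0, α_1)), with bracket [x^α, x^β] = ((2-α_1)β_0 - α_0(2-β_1))·x^{α+β}. Then this bracket satisfies the Jacobi identity, so B is a Lie algebra. -/
/-!
Both identities are (bi/tri)linear, so it suffices to check them on the basis `x^α`. There
`[x^α, x^β] = c(α, β) x^{α+β}` with `c` alternating, and the Jacobi identity on `x^α, x^β, x^γ`
becomes the polynomial identity `∑_cyc c(α, β) c(α + β, γ) = 0`.
-/

namespace LinearMap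

variable {ι R M N : Type*} [CommRing R] [AddCommGroup M] [Module R M] [AddCommGroup N]
  [Module R N]

theorem isAlt_of_basis (e : Module.Basis ι R M) {b : M →ₗ[R] M →ₗ[R] N}
    (hdiag : ∀ i, b (e i) (e i) = 0) (hanti : ∀ i j, b (e i) (e j) = -b (e j) (e i)) :
    b.IsAlt := by
  have hflip : b = -b.flip := ext_basis e e hanti
  intro u
  have hu : u ∈ Submodule.span R (Set.range e) := e.span_eq ▸ Submodule.mem_top
  induction hu using Submodule.span_induction with
  | mem u hu =>
    obtain ⟨i, rfl⟩ := hu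
    exact hdiag i
  | zero => simp
  | add x y _ _ hx hy =>
    have hxy : b x y = -b y x := congr_fun₂ hflip x y
    simp only [map_add, add_apply, hx, hy, hxy, zero_add, add_zero, add_neg_cancel]
  | smul r x _ hx => simp [hx]

/-- The Jacobi sum `[[u, v], w] + [[v, w], u] + [[w, u], v]`, as a linear map in `w`. -/
def jacobiator (b : M →ₗ[R] M →ₗ[R] M) (u v : M) : M →ₗ[R] M :=
  b (b u v) + (b.flip u).comp (b v) + (b.flip v).comp (b.flip u)

variable {b : M →ₗ[R] M →ₗ[R] M}

theorem jacobiator_apply (u v w : M) :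
    b.jacobiator u v w = b (b u v) w + b (b v w) u + b (b w u) v :=
  rfl

theorem jacobiator_rotate (u v w : M) : b.jacobiator u v w = b.jacobiator v w u := by
  simp only [jacobiator_apply]
  abel

/-- Cyclic symmetry turns linearity in the last argument into linearity in each argument. -/
theorem jacobiator_eq_zero_of_basis (e : Module.Basis ι R M)
    (h : ∀ i j k, b.jacobiator (e i) (e j) (e k) = 0) (u v w : M) :
    b.jacobiator u v w = 0 := by
  have h₁ : ∀ i j, b.jacobiator (e i) (e j) = 0 := fun i j => e.ext fun k => h i j k
  have h₂ : ∀ i v, b.jacobiator (e i) v = 0 := fun i v => e.ext fun j => by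
    rw [jacobiator_rotate, jacobiator_rotate, h₁, zero_apply, zero_apply]
  have h₃ : b.jacobiator v w = 0 := e.ext fun k => by
    rw [jacobiator_rotate, jacobiator_rotate, h₂, zero_apply, zero_apply]
  rw [jacobiator_rotate, h₃, zero_apply]

end LinearMap

section StructureConstants

open Finsupp

variable {R Γ : Type*} [CommRing R] [AddCommGroup Γ] {c : Γ → Γ → R}
  {b : (Γ →₀ R) →ₗ[R] (Γ →₀ R) →ₗ[R] (Γ →₀ R)}

theorem Finsupp.isAlt_of_apply_single
    (hb : ∀ α β, b (single α 1) (single β 1) = c α β • single (α + β) 1)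
    (hdiag : ∀ α, c α α = 0) (hanti : ∀ α β, c α β = -c β α) : b.IsAlt := by
  refine LinearMap.isAlt_of_basis Finsupp.basisSingleOne (fun α => ?_) (fun α β => ?_)
  · simp only [coe_basisSingleOne, hb, hdiag, zero_smul]
  · simp only [coe_basisSingleOne, hb, hanti β α, neg_smul, neg_neg, add_comm α β]

theorem Finsupp.jacobiator_eq_zero_of_apply_single
    (hb : ∀ α β, b (single α 1) (single β 1) = c α β • single (α + β) 1)
    (hcocycle : ∀ α β γ,
      c α β * c (α + β) γ + c β γ * c (β + γ) α + c γ α * c (γ + α) β = 0)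
    (u v w : Γ →₀ R) : b.jacobiator u v w = 0 := by
  refine LinearMap.jacobiator_eq_zero_of_basis Finsupp.basisSingleOne (fun α β γ => ?_) u v w
  simp only [coe_basisSingleOne, LinearMap.jacobiator_apply, hb, map_smul,
    LinearMap.smul_apply, smul_smul]
  rw [show β + γ + α = α + β + γ by abel, show γ + α + β = α + β + γ by abel, ← add_smul,
    ← add_smul, hcocycle, zero_smul]

end StructureConstants

section ContactBracket

variable {R : Type*} [CommRing R]

def contactCoeff (α β : R × R) : R :=
  (2 - α.2) * β.1 - α.1 * (2 - β.2)

theorem contactCoeff_self (α : R × R) : contactCoeff α α = 0 := by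
  unfold contactCoeff
  ring

theorem contactCoeff_swap (α β : R × R) : contactCoeff α β = -contactCoeff β α := by
  unfold contactCoeff
  ring

theorem contactCoeff_cocycle (α β γ : R × R) :
    contactCoeff α β * contactCoeff (α + β) γ + contactCoeff β γ * contactCoeff (β + γ) α +
      contactCoeff γ α * contactCoeff (γ + α) β = 0 := by
  simp only [contactCoeff, Prod.fst_add, Prod.snd_add]
  ring

end ContactBracket

theorem stmt11_general {F : Type*} [Field F]
    (Γ : AddSubgroup (F × F))
    (b : (Γ →₀ F) →ₗ[F] (Γ →₀ F) →ₗ[F] (Γ →₀ F))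
    (hb : ∀ α β : Γ, b (Finsupp.single α 1) (Finsupp.single β 1) =
      ((2 - (α : F × F).2) * (β : F × F).1 - (α : F × F).1 * (2 - (β : F × F).2)) •
        Finsupp.single (α + β) 1) :
    (∀ u : Γ →₀ F, b u u = 0) ∧
    (∀ u v w : Γ →₀ F, b (b u v) w + b (b v w) u + b (b w u) v = 0) := by
  have hb' : ∀ α β : Γ, b (Finsupp.single α 1) (Finsupp.single β 1) =
      contactCoeff (α : F × F) β • Finsupp.single (α + β) 1 := hb
  refine ⟨Finsupp.isAlt_of_apply_single hb' (fun α => contactCoeff_self _)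
    (fun α β => contactCoeff_swap _ _), fun u v w => ?_⟩
  refine Finsupp.jacobiator_eq_zero_of_apply_single hb' (fun α β γ => ?_) u v w
  simpa only [AddSubgroup.coe_add] using contactCoeff_cocycle (α : F × F) β γ

/-- The bracket [x^α,x^β] = ((2-α₁)β₀ - α₀(2-β₁))x^{α+β} on F[Γ],
Γ ≤ F², satisfies alternativity and the Jacobi identity. -/
theorem stmt11 {F : Type*} [Field F] [CharZero F]
    (Γ : AddSubgroup (F × F))
    (b : (Γ →₀ F) →ₗ[F] (Γ →₀ F) →ₗ[F] (Γ →₀ F))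
    (hb : ∀ α β : Γ, b (Finsupp.single α 1) (Finsupp.single β 1) =
      ((2 - (α : F × F).2) * (β : F × F).1 - (α : F × F).1 * (2 - (β : F × F).2)) •
        Finsupp.single (α + β) 1) :
    (∀ u : Γ →₀ F, b u u = 0) ∧
    (∀ u v w : Γ →₀ F, b (b u v) w + b (b v w) u + b (b w u) v = 0) :=
  stmt11_general Γ b hb
end

section
/- Let F be a field of characteristic 0, Γ ≤ F an additive subgroup, B = F[Γ] with bracket [x^a, x^b] = (b - a)x^{a+b}, and suppose Γ ≠ {0}. Let B_0 = Span{x^a : a ∈ Γ} act on itself by the adjoint action. Then for any nonzero b ∈ Γ, the element x^b generates B as a module over the subalgebra generated by {x^a : a ∈ Γ} under iterated brackets; concretely, the smallest subspace containing x^b and closed under ad_{x^a} for all a ∈ Γ is all of B. -/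
/-- In the generalized Witt algebra F[Γ] with [x^a,x^c] = (c-a)x^{a+c},
Γ ≠ {0}, the smallest subspace containing x^b (b ≠ 0) and closed under all
ad_{x^a} is the whole algebra. -/
theorem stmt15 {F : Type*} [Field F] [CharZero F]
    (Γ : AddSubgroup F) (hΓ : Γ ≠ ⊥)
    (br : (Γ →₀ F) →ₗ[F] (Γ →₀ F) →ₗ[F] (Γ →₀ F))
    (hbr : ∀ a c : Γ, br (Finsupp.single a 1) (Finsupp.single c 1) =
      ((c : F) - (a : F)) • Finsupp.single (a + c) 1)
    (b : Γ) (hb : b ≠ 0)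
    (W : Submodule F (Γ →₀ F)) (hW : Finsupp.single b 1 ∈ W)
    (hWcl : ∀ a : Γ, ∀ w ∈ W, br (Finsupp.single a 1) w ∈ W) :
    W = ⊤ := by
  have hbF : (b : F) ≠ 0 := by
    intro h
    exact hb (Subtype.ext h)
  -- x^0 ∈ W
  have h0 : Finsupp.single (0 : Γ) 1 ∈ W := by
    have h1 := hWcl (-b) _ hW
    rw [hbr (-b) b] at h1
    have hsum : (-b) + b = (0 : Γ) := neg_add_cancel b
    rw [hsum] at h1
    have hcoef : ((b : F) - ((-b : Γ) : F)) ≠ 0 := by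
      push_cast
      intro h
      apply hbF
      have h2 : (2 : F) * (b : F) = 0 := by linear_combination h
      rcases mul_eq_zero.mp h2 with h3 | h3
      · exact absurd h3 two_ne_zero
      · exact h3
    have := W.smul_mem ((b : F) - ((-b : Γ) : F))⁻¹ h1
    rwa [smul_smul, inv_mul_cancel₀ hcoef, one_smul] at this
  -- all singles
  have hall : ∀ c : Γ, Finsupp.single c 1 ∈ W := by
    intro c
    by_cases hc : c = 0
    · rw [hc]; exact h0
    · have h1 := hWcl c _ h0
      rw [hbr c 0] at h1
      have hsum : c + 0 = c := add_zero c
      rw [hsum] at h1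
      have hcoef : (((0 : Γ) : F) - (c : F)) ≠ 0 := by
        simp only [ZeroMemClass.coe_zero, zero_sub, neg_ne_zero]
        exact fun h => hc (Subtype.ext (by simpa using h))
      have := W.smul_mem (((0 : Γ) : F) - (c : F))⁻¹ h1
      rwa [smul_smul, inv_mul_cancel₀ hcoef, one_smul] at this
  rw [eq_top_iff]
  rintro f -
  induction f using Finsupp.induction_linear with
  | zero => exact W.zero_mem
  | add f g hf hg => exact W.add_mem hf hg
  | single a r =>
      have : Finsupp.single a r = r • Finsupp.single a 1 := by
        rw [Finsupp.smul_single, smul_eq_mul, mul_one]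
      rw [this]
      exact W.smul_mem r (hall a)
end
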